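/- Let λ ∈ ℂ with |λ| = 2 and Re λ < 1, and set c(λ) = λ/2 − λ²/4. Then c(λ) belongs to the Mandelbrot set M if and only if λ = −2. Equivalently, for all such λ with λ ≠ −2 one has |p_{c(λ)}²(0)| = |c(λ)(c(λ)+1)| > 2. -/

import Mathlib

/-!
The second iterate of `0` under `z ↦ z² + c` is `c (c + 1)`. Writing `x = Re λ`, the
constraint `|λ| = 2` turns `|c(λ) (c(λ) + 1)|²` into the cubic `(2 - x)(5 - x²)`, and
`(2 - x)(5 - x²) - 4 = (1 - x)(x + 2)(3 - x)` is positive on `-2 < x < 1`, i.e. for every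
admissible `λ ≠ -2`. At `λ = -2` we get `c = -2`, whose critical orbit `0, -2, 2, 2, …` stays
bounded by `2`.
-/
/-- The Mandelbrot set: `M = {c ∈ ℂ : |p_cⁿ(0)| ≤ 2 for all n ≥ 1}`, where
`p_c(z) = z² + c`. -/
def Mandelbrot : Set ℂ :=
  {c : ℂ | ∀ n : ℕ, 1 ≤ n → ‖(fun z : ℂ => z ^ 2 + c)^[n] 0‖ ≤ 2}

open Complex

theorem iterate_two_sq_add_apply_zero (c : ℂ) : (fun z : ℂ => z ^ 2 + c)^[2] 0 = c * (c + 1) := by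
  simp only [Function.iterate_succ_apply', Function.iterate_zero_apply]
  ring

theorem notMem_Mandelbrot_of_two_lt_norm {c : ℂ} (h : 2 < ‖c * (c + 1)‖) :
    c ∉ Mandelbrot :=
  fun hc => (hc 2 one_le_two).not_gt (iterate_two_sq_add_apply_zero c ▸ h)

theorem neg_two_mem_Mandelbrot : (-2 : ℂ) ∈ Mandelbrot := by
  have hfix : (fun z : ℂ => z ^ 2 + -2) 2 = 2 := by norm_num
  rintro (_ | _ | k) hk
  · omega
  · norm_num
  · rw [show k + 1 + 1 = k + 2 by rfl, Function.iterate_add_apply, iterate_two_sq_add_apply_zero,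
      show (-2 : ℂ) * (-2 + 1) = 2 by norm_num, Function.iterate_fixed hfix]
    norm_num

theorem Complex.neg_norm_lt_re {z : ℂ} (hz : z ≠ -‖z‖) : -‖z‖ < z.re := by
  refine (neg_le.1 ((neg_le_abs z.re).trans (abs_re_le_norm z))).lt_of_ne fun h => hz ?_
  have him : z.im = 0 := abs_re_eq_norm.1 (by rw [← h, abs_neg, abs_norm])
  exact Complex.ext (by simp [← h]) (by simp [him])

theorem normSq_two_sub_of_normSq_eq_four {lam : ℂ} (h : normSq lam = 4) :
    normSq (2 - lam) = 8 - 4 * lam.re := by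
  rw [normSq_apply] at h
  simp only [normSq_apply, sub_re, sub_im, re_ofNat, im_ofNat]
  linear_combination h

theorem normSq_four_add_two_mul_sub_sq_of_normSq_eq_four {lam : ℂ} (h : normSq lam = 4) :
    normSq (4 + 2 * lam - lam ^ 2) = 16 * (5 - lam.re ^ 2) := by
  rw [normSq_apply] at h
  simp only [normSq_apply, pow_two, add_re, add_im, sub_re, sub_im, mul_re, mul_im, re_ofNat,
    im_ofNat]
  linear_combination (lam.im ^ 2 + lam.re ^ 2 - 4 * lam.re + 16) * h

theorem normSq_c_mul_c_add_one_of_norm_eq_two {lam : ℂ} (h : ‖lam‖ = 2) :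
    normSq ((lam / 2 - lam ^ 2 / 4) * ((lam / 2 - lam ^ 2 / 4) + 1))
      = (2 - lam.re) * (5 - lam.re ^ 2) := by
  have hsq : normSq lam = 4 := by rw [normSq_eq_norm_sq, h]; norm_num
  have hfactor : (lam / 2 - lam ^ 2 / 4) * ((lam / 2 - lam ^ 2 / 4) + 1)
      = lam * (2 - lam) * (4 + 2 * lam - lam ^ 2) / 16 := by ring
  rw [hfactor, map_div₀, map_mul, map_mul, hsq, normSq_two_sub_of_normSq_eq_four hsq,
    normSq_four_add_two_mul_sub_sq_of_normSq_eq_four hsq, normSq_ofNat]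
  ring

theorem four_lt_two_sub_mul_five_sub_sq {x : ℝ} (h₁ : -2 < x) (h₂ : x < 1) :
    4 < (2 - x) * (5 - x ^ 2) := by
  have hfactor : 0 < (1 - x) * (x + 2) * (3 - x) :=
    mul_pos (mul_pos (by linarith) (by linarith)) (by linarith)
  linear_combination hfactor

theorem two_lt_norm_c_mul_c_add_one {lam : ℂ} (habs : ‖lam‖ = 2) (hre : lam.re < 1)
    (hne : lam ≠ -2) :
    2 < ‖(lam / 2 - lam ^ 2 / 4) * ((lam / 2 - lam ^ 2 / 4) + 1)‖ := by
  have hlower : -2 < lam.re := by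
    simpa [habs] using Complex.neg_norm_lt_re (z := lam) (by simpa [habs] using hne)
  refine lt_of_pow_lt_pow_left₀ 2 (norm_nonneg _) ?_
  rw [← normSq_eq_norm_sq, normSq_c_mul_c_add_one_of_norm_eq_two habs]
  norm_num
  exact four_lt_two_sub_mul_five_sub_sq hlower hre

/-- Let `λ ∈ ℂ` with `|λ| = 2` and `Re λ < 1`, and set `c(λ) = λ/2 - λ²/4`.
Then `c(λ)` lies in the Mandelbrot set if and only if `λ = -2`; equivalently,
for all such `λ ≠ -2` one has `|p_{c(λ)}²(0)| = |c(λ)(c(λ)+1)| > 2`. -/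
theorem c_lambda_in_Mandelbrot_iff (lam : ℂ) (habs : ‖lam‖ = 2)
    (hre : lam.re < 1) :
    ((lam / 2 - lam ^ 2 / 4) ∈ Mandelbrot ↔ lam = -2) ∧
      (lam ≠ -2 →
        2 < ‖(lam / 2 - lam ^ 2 / 4) * ((lam / 2 - lam ^ 2 / 4) + 1)‖) := by
  have hescape := two_lt_norm_c_mul_c_add_one habs hre
  refine ⟨⟨fun hM => ?_, fun h => ?_⟩, hescape⟩
  · by_contra hne
    exact notMem_Mandelbrot_of_two_lt_norm (hescape hne) hM
  · subst h
    norm_num [neg_two_mem_Mandelbrot]
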